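/- arXiv:1502.04226 — 2 statements merged into one kernel-verified Lean document; each statement's English description precedes it below -/
import Mathlib

section
/- Let f : {0,1}ⁿ → {0,1} be computed by a k-OBDD P of width w. Then N(f) ≤ w^{(k−1)w + 1}, where N(f) = min over orders θ of max over partitions π agreeing with θ of the number of distinct subfunctions of f under the partition π. -/
/-- A `k`-OBDD of width `w` over `n` Boolean variables: `k` layers, each an OBDD
(oblivious read-once leveled program) reading the variables in the common order
`ord`, with at most `w` nodes per level (levels are modeled by state sets `Fin w`,
with transition `δ`, a start node and an acceptance labeling of the final level). -/
structure KOBDD (n k w : ℕ) where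
  ord : Equiv.Perm (Fin n)
  δ : Fin k → Fin n → Fin w → Bool → Fin w
  start : Fin w
  accept : Fin w → Bool

/-- Run one layer `l` of the program from state `s` on input `x`: the variables are
read in the order given by `ord`. -/
def KOBDD.runLayer {n k w : ℕ} (P : KOBDD n k w) (x : Fin n → Bool)
    (l : Fin k) (s : Fin w) : Fin w :=
  (List.finRange n).foldl (fun t j => P.δ l j t (x (P.ord j))) s

/-- Run the whole program on input `x`. -/
def KOBDD.run {n k w : ℕ} (P : KOBDD n k w) (x : Fin n → Bool) : Fin w :=
  (List.finRange k).foldl (fun s l => P.runLayer x l s) P.start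

/-- The program `P` computes the Boolean function `f`. -/
def KOBDD.computes {n k w : ℕ} (P : KOBDD n k w) (f : (Fin n → Bool) → Bool) : Prop :=
  ∀ x, f x = P.accept (P.run x)

/-- `N^π(f)` for the prefix-partition `π` agreeing with the order `θ` whose first part
consists of the first `u` variables in the order: the number of distinct subfunctions
obtained by fixing those variables. -/
noncomputable def numSubfunctions (n : ℕ) (f : (Fin n → Bool) → Bool)
    (θ : Equiv.Perm (Fin n)) (u : ℕ) : ℕ :=
  Set.ncard {g : (Fin n → Bool) → Bool |
    ∃ ρ : Fin n → Bool,
      g = fun y => f (fun i => if (θ.symm i : ℕ) < u then ρ i else y i)}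

/-- `N^θ(f)`: the maximum of `N^π(f)` over prefix-partitions `π` agreeing with `θ`. -/
noncomputable def NOrd (n : ℕ) (f : (Fin n → Bool) → Bool)
    (θ : Equiv.Perm (Fin n)) : ℕ :=
  (Finset.Ico 1 n).sup (numSubfunctions n f θ)

/-- `N(f)`: the minimum of `N^θ(f)` over all orders `θ`. -/
noncomputable def Nsub (n : ℕ) (f : (Fin n → Bool) → Bool) : ℕ :=
  Finset.univ.inf' Finset.univ_nonempty (NOrd n f)

section Aux

variable {n k w : ℕ} (P : KOBDD n k w)

/-- Fold of layer `l` over a list of positions. -/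
def KOBDD.foldPos (x : Fin n → Bool) (l : Fin k) (L : List (Fin n)) (s : Fin w) : Fin w :=
  L.foldl (fun t j => P.δ l j t (x (P.ord j))) s

/-- Prefix transition function of layer `l` determined by the assignment `ρ`. -/
def KOBDD.pre (u : ℕ) (ρ : Fin n → Bool) (l : Fin k) (s : Fin w) : Fin w :=
  P.foldPos ρ l ((List.finRange n).take u) s

/-- Suffix transition function of layer `l` determined by the assignment `y`. -/
def KOBDD.suf (u : ℕ) (y : Fin n → Bool) (l : Fin k) (s : Fin w) : Fin w :=
  P.foldPos y l ((List.finRange n).drop u) s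

/-- Encoding of a prefix assignment: the state after layer 0's prefix, and the
prefix transition functions of the other layers. -/
def KOBDD.enc (u : ℕ) (ρ : Fin n → Bool) : Fin w × (Fin (k - 1) → Fin w → Fin w) :=
  ⟨(if h : 0 < k then P.pre u ρ ⟨0, h⟩ P.start else P.start),
   fun m t => P.pre u ρ ⟨m.val + 1, by have := m.isLt; omega⟩ t⟩

/-- Decoding: reconstruct the subfunction from the encoding. -/
def KOBDD.dec (u : ℕ) (p : Fin w × (Fin (k - 1) → Fin w → Fin w)) (y : Fin n → Bool) : Bool :=
  P.accept ((List.finRange (k - 1)).foldl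
    (fun t m => P.suf u y ⟨m.val + 1, by have := m.isLt; omega⟩ (p.2 m t))
    (if h : 0 < k then P.suf u y ⟨0, h⟩ p.1 else P.start))

lemma KOBDD.runLayer_split (u : ℕ) (ρ y : Fin n → Bool) (l : Fin k) (s : Fin w) :
    P.runLayer (fun i => if ((P.ord.symm i : ℕ) < u) then ρ i else y i) l s
      = P.suf u y l (P.pre u ρ l s) := by
  unfold KOBDD.runLayer
  have h1 : ((List.finRange n).take u).foldl
      (fun t j => P.δ l j t ((fun i => if ((P.ord.symm i : ℕ) < u) then ρ i else y i) (P.ord j))) s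
      = P.pre u ρ l s := by
    unfold KOBDD.pre KOBDD.foldPos
    apply List.foldl_ext
    intro a j hj
    have hj' : (j : ℕ) < u := by
      simp only [List.mem_take_iff_getElem] at hj
      obtain ⟨i, hi, rfl⟩ := hj
      simp only [List.getElem_finRange, Fin.coe_cast]
      omega
    simp [hj']
  have h2 : ∀ t : Fin w, ((List.finRange n).drop u).foldl
      (fun t j => P.δ l j t ((fun i => if ((P.ord.symm i : ℕ) < u) then ρ i else y i) (P.ord j))) t
      = P.suf u y l t := by
    intro t
    unfold KOBDD.suf KOBDD.foldPos
    apply List.foldl_ext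
    intro a j hj
    have hj' : ¬ ((j : ℕ) < u) := by
      simp only [List.mem_drop_iff_getElem] at hj
      obtain ⟨i, hi, rfl⟩ := hj
      simp only [List.getElem_finRange, Fin.coe_cast]
      omega
    simp [hj']
  conv_lhs => rw [show (List.finRange n) = (List.finRange n).take u ++ (List.finRange n).drop u from
    (List.take_append_drop u _).symm]
  rw [List.foldl_append, h1, h2]

lemma KOBDD.run_eq_dec (u : ℕ) (ρ y : Fin n → Bool) :
    P.accept (P.run (fun i => if ((P.ord.symm i : ℕ) < u) then ρ i else y i))
      = P.dec u (P.enc u ρ) y := by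
  unfold KOBDD.run KOBDD.dec KOBDD.enc
  cases k with
  | zero => simp [List.finRange_zero]
  | succ k' =>
      simp only [Nat.succ_sub_one, dif_pos (Nat.succ_pos k')]
      rw [List.finRange_succ, List.foldl_cons, List.foldl_map]
      have hstep : (fun (x : Fin w) (m : Fin k') =>
          P.runLayer (fun i => if ((P.ord.symm i : ℕ) < u) then ρ i else y i) m.succ x)
          = fun (t : Fin w) (m : Fin k') => P.suf u y ⟨(m : ℕ) + 1, by have := m.isLt; omega⟩
              (P.pre u ρ ⟨(m : ℕ) + 1, by have := m.isLt; omega⟩ t) := by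
        funext t m
        rw [P.runLayer_split u ρ y m.succ t]
        rfl
      have hinit : P.runLayer (fun i => if ((P.ord.symm i : ℕ) < u) then ρ i else y i) 0 P.start
          = P.suf u y ⟨0, Nat.succ_pos k'⟩ (P.pre u ρ ⟨0, Nat.succ_pos k'⟩ P.start) := by
        rw [P.runLayer_split u ρ y 0 P.start]
        rfl
      rw [hstep, hinit]

end Aux

/-- if `f` is computed by a `k`-OBDD of width `w`, then
`N(f) ≤ w^((k-1)w + 1)`. -/
theorem stmt3 (n k w : ℕ) (f : (Fin n → Bool) → Bool)
    (P : KOBDD n k w) (hP : P.computes f) :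
    Nsub n f ≤ w ^ ((k - 1) * w + 1) := by
  have h1 : Nsub n f ≤ NOrd n f P.ord := Finset.inf'_le _ (Finset.mem_univ _)
  refine h1.trans ?_
  apply Finset.sup_le
  intro u _
  -- every subfunction is in the range of `P.dec u`
  have hsub : {g : (Fin n → Bool) → Bool |
      ∃ ρ : Fin n → Bool,
        g = fun y => f (fun i => if (P.ord.symm i : ℕ) < u then ρ i else y i)}
      ⊆ Set.range (P.dec u) := by
    rintro g ⟨ρ, rfl⟩
    refine ⟨P.enc u ρ, ?_⟩
    funext y
    rw [← P.run_eq_dec u ρ y, ← hP]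
  have hfin : (Set.range (P.dec u)).Finite := Set.finite_range _
  have h2 : numSubfunctions n f P.ord u ≤ (Set.range (P.dec u)).ncard :=
    Set.ncard_le_ncard hsub hfin
  refine h2.trans ?_
  have h3 : (Set.range (P.dec u)).ncard
      ≤ Nat.card (Fin w × (Fin (k - 1) → Fin w → Fin w)) := by
    rw [← Set.image_univ]
    refine (Set.ncard_image_le (Set.finite_univ)).trans ?_
    rw [Set.ncard_univ]
  refine h3.trans ?_
  have : Nat.card (Fin w × (Fin (k - 1) → Fin w → Fin w)) = w * (w ^ w) ^ (k - 1) := by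
    simp [Nat.card_eq_fintype_card, Fintype.card_fun]
  rw [this, ← pow_mul, mul_comm w ((k-1)), pow_succ, mul_comm]
end

section
/- For integers k = k(n), w = w(n) with k ≥ 2, w ≥ 64, and 2kw(2w + ⌈log₂ k⌉ + ⌈log₂(2w)⌉) < n, the class of Boolean functions on n variables computable by k-OBDDs of width ⌊w/16⌋ − 3 is strictly contained in the class computable by k-OBDDs of width w. -/
/-!
The proof is a counting argument. Write `w = V + 1` and call the states `< V` live and the state
`V` the sink. For every table `A : Fin k → Fin S → Fin V → Fin V` there is a `k`-OBDD of width `w`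
with the identity order on the first `m = 2kV + S` variables: in layer `l`, a one at table slot
`q` applies `A l q` to a live state, a one at steering slot `(l, s)` moves a live state to `s`,
and a one at crossing slot `(l, v)` sends `v` to the absorbing sink, which is the only accepting
state. An input with three ones (steer to `s` in layer `l`, apply slot `q`, cross at
`v = A l q s`) accepts for `A` but not for any `B` with `B l q s ≠ v`, so the `(V ^ V) ^ (k S)`
tables give distinct functions of the first `m` variables.

Fixing all but the first `m` variables to `false` in a `k`-OBDD of width `w'` leaves a `k`-OBDD
of width `w'` on `m` variables, once the steps reading fixed variables are merged into their
neighbours. There are only `m! · w' ^ (2 w' m k) · w' · 2 ^ w'` of these, fewer than the tables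
when `w' = ⌊w/16⌋ - 3` and `S = kV`.
-/

namespace List

variable {ι α : Type*}

theorem foldl_ite_eq_foldl_filter (p : ι → Bool) (f : ι → α → α) (L : List ι) (s : α) :
    L.foldl (fun t i => if p i then f i t else t) s =
      (L.filter p).foldl (fun t i => f i t) s := by
  induction L generalizing s with
  | nil => rfl
  | cons i L ih => by_cases h : p i <;> simp [h, ih]

theorem foldl_eq_of_absorbing {f : α → ι → α} {S : Set α} {a : α} {i₀ : ι}
    (hfix : ∀ i, f a i = a) (hhit : ∀ s ∈ S, f s i₀ = a) (hS : ∀ i ≠ i₀, ∀ s ∈ S, f s i ∈ S) :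
    ∀ {L : List ι}, i₀ ∈ L → ∀ s ∈ S, L.foldl f s = a
  | i :: L, hL, s, hs => by
    by_cases hi : i = i₀
    · subst hi
      simp [hhit s hs, foldl_fixed' hfix]
    · exact foldl_eq_of_absorbing hfix hhit hS ((mem_cons.1 hL).resolve_left (Ne.symm hi)) _
        (hS i hi s hs)

theorem foldl_mem_of_forall_mem {f : α → ι → α} {S : Set α} (hS : ∀ i, ∀ s ∈ S, f s i ∈ S) :
    ∀ (L : List ι), ∀ s ∈ S, L.foldl f s ∈ S
  | [], _, hs => hs
  | i :: L, s, hs => foldl_mem_of_forall_mem hS L _ (hS i s hs)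

theorem exists_foldl_eq_foldl_filter (p : ι → Bool) (g : ι → Bool → α → α) (L : List ι) :
    ∃ (pre : α → α) (c : List (Bool → α → α)), c.length = (L.filter p).length ∧
      ∀ x : ι → Bool, (∀ i, p i = false → x i = false) → ∀ s,
        L.foldl (fun t i => g i (x i) t) s =
          ((L.filter p).zip c).foldl (fun t ic => ic.2 (x ic.1) t) (pre s) := by
  induction L with
  | nil => exact ⟨id, [], rfl, fun _ _ _ => rfl⟩
  | cons i L ih =>
    obtain ⟨pre, c, hc, h⟩ := ih
    cases hi : p i
    · refine ⟨pre ∘ g i false, c, by simpa [hi] using hc, fun x hx s => ?_⟩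
      simp [hi, h x hx, hx i hi]
    · refine ⟨id, (fun b => pre ∘ g i b) :: c, by simpa [hi] using hc, fun x hx s => ?_⟩
      simp [hi, h x hx]

theorem exists_foldl_eq_foldl_zip_filter (p : ι → Bool) (g : ι → Bool → α → α) (L : List ι)
    (hL : L.filter p ≠ []) :
    ∃ c : List (Bool → α → α), c.length = (L.filter p).length ∧
      ∀ x : ι → Bool, (∀ i, p i = false → x i = false) → ∀ s,
        L.foldl (fun t i => g i (x i) t) s =
          ((L.filter p).zip c).foldl (fun t ic => ic.2 (x ic.1) t) s := by
  obtain ⟨pre, c, hc, h⟩ := exists_foldl_eq_foldl_filter p g L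
  obtain ⟨j, R, hR⟩ := exists_cons_of_ne_nil hL
  obtain ⟨G, c, rfl⟩ := exists_cons_of_length_eq_add_one (by simpa [hR] using hc)
  refine ⟨(fun b => G b ∘ pre) :: c, hc, fun x hx s => ?_⟩
  simp [h x hx, hR]

theorem foldl_zip_eq_foldl_finRange {β γ : Type*} {m : ℕ} (R : List β) (c : List γ)
    (hR : R.length = m) (hc : c.length = m) (F : α → β × γ → α) (s : α) :
    (R.zip c).foldl F s =
      (finRange m).foldl (fun t i => F t (R.get (i.cast hR.symm), c.get (i.cast hc.symm))) s := by
  subst hR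
  have : R.zip c = (finRange R.length).map (fun i => (R.get i, c.get (i.cast hc.symm))) := by
    apply ext_getElem <;> simp [hc]
  rw [this, foldl_map]
  rfl

end List

theorem Equiv.Perm.length_filter_finRange_lt {n : ℕ} (σ : Equiv.Perm (Fin n)) {m : ℕ}
    (hmn : m ≤ n) : ((List.finRange n).filter (fun i => decide ((σ i : ℕ) < m))).length = m := by
  have hσ := ((σ.map_finRange_perm).filter (fun i : Fin n => decide ((i : ℕ) < m))).length_eq
  rw [List.filter_map, List.length_map] at hσ
  rw [show (fun i => decide ((σ i : ℕ) < m)) = (fun i : Fin n => decide ((i : ℕ) < m)) ∘ σ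
    from rfl, hσ, ← List.toFinset_card_of_nodup ((List.nodup_finRange n).filter _)]
  simpa [hmn] using Fin.card_filter_val_lt (n := n) (m := m)

def zeroExtend {m n : ℕ} (y : Fin m → Bool) : Fin n → Bool :=
  fun i => if h : (i : ℕ) < m then y ⟨i, h⟩ else false

namespace KOBDD

variable {n k w : ℕ}

def equivProd (n k w : ℕ) : KOBDD n k w ≃
    Equiv.Perm (Fin n) × (Fin k → Fin n → Fin w → Bool → Fin w) × Fin w × (Fin w → Bool) where
  toFun P := (P.ord, P.δ, P.start, P.accept)
  invFun p := ⟨p.1, p.2.1, p.2.2.1, p.2.2.2⟩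
  left_inv _ := rfl
  right_inv _ := rfl

instance (n k w : ℕ) : Finite (KOBDD n k w) := Finite.of_equiv _ (equivProd n k w).symm

theorem card_eq (n k w : ℕ) :
    Nat.card (KOBDD n k w) = n.factorial * (((w ^ 2) ^ w) ^ n) ^ k * w * 2 ^ w := by
  rw [Nat.card_congr (equivProd n k w)]
  simp only [Nat.card_prod, Nat.card_fun, Nat.card_perm, Nat.card_eq_fintype_card (α := Fin _),
    Nat.card_eq_fintype_card (α := Bool), Fintype.card_fin, Fintype.card_bool, mul_assoc]

def widen {w' : ℕ} (h : w' ≤ w) (P : KOBDD n k w') : KOBDD n k w where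
  ord := P.ord
  δ l j t b := if ht : (t : ℕ) < w' then Fin.castLE h (P.δ l j ⟨t, ht⟩ b) else t
  start := Fin.castLE h P.start
  accept t := if ht : (t : ℕ) < w' then P.accept ⟨t, ht⟩ else false

theorem run_widen {w' : ℕ} (h : w' ≤ w) (P : KOBDD n k w') (x : Fin n → Bool) :
    (P.widen h).run x = Fin.castLE h (P.run x) :=
  List.foldl_hom (Fin.castLE h) fun _ _ => List.foldl_hom (Fin.castLE h) fun _ _ => by
    simp [widen]

theorem computes.widen {w' : ℕ} (h : w' ≤ w) {P : KOBDD n k w'} {f : (Fin n → Bool) → Bool}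
    (hP : P.computes f) : (P.widen h).computes f := fun x => by
  rw [hP x, run_widen]
  simp [KOBDD.widen]

/-- Each layer reads the `m` unfixed variables at the same positions; the steps at the other
positions are merged into the preceding such step, or into the following one at the start of a
layer. -/
theorem exists_runLayer_eq_runLayer_zeroExtend (P : KOBDD n k w) {m : ℕ} (hm : 0 < m)
    (hmn : m ≤ n) :
    ∃ Q : KOBDD m k w, Q.start = P.start ∧ Q.accept = P.accept ∧
      ∀ y : Fin m → Bool, ∀ l s, Q.runLayer y l s = P.runLayer (zeroExtend y) l s := by
  set p : Fin n → Bool := fun j => decide ((P.ord j : ℕ) < m)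
  set R := (List.finRange n).filter p
  have hR : R.length = m := P.ord.length_filter_finRange_lt hmn
  choose c hc hrun using fun l : Fin k =>
    List.exists_foldl_eq_foldl_zip_filter p (fun j b t => P.δ l j t b) _
      (List.ne_nil_of_length_pos (hR ▸ hm))
  have hRp (i : Fin m) : ((P.ord (R.get (i.cast hR.symm)) : ℕ) < m) := by
    simpa [p] using List.of_mem_filter (List.get_mem R (i.cast hR.symm))
  let σ : Fin m → Fin m := fun i => ⟨P.ord (R.get (i.cast hR.symm)), hRp i⟩
  have hσ : Function.Injective σ := fun i j hij => by
    have h := P.ord.injective (Fin.ext (Fin.mk.inj_iff.mp hij))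
    exact Fin.cast_injective _ (((List.nodup_finRange n).filter p).injective_get h)
  refine ⟨⟨Equiv.ofBijective σ hσ.bijective_of_finite,
    fun l i t b => (c l).get (i.cast ((hc l).trans hR).symm) b t, P.start, P.accept⟩,
    rfl, rfl, fun y l s => ?_⟩
  rw [runLayer, runLayer, hrun l (fun j => zeroExtend y (P.ord j)),
    List.foldl_zip_eq_foldl_finRange _ _ hR ((hc l).trans hR)]
  · congr 1
    funext t i
    simp only [zeroExtend, dif_pos (hRp i)]
    rfl
  · intro j hj
    simp only [p, decide_eq_false_iff_not] at hj
    simp only [zeroExtend, dif_neg hj]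

theorem exists_computes_comp_zeroExtend {P : KOBDD n k w} {f : (Fin n → Bool) → Bool}
    (hP : P.computes f) {m : ℕ} (hm : 0 < m) (hmn : m ≤ n) :
    ∃ Q : KOBDD m k w, Q.computes (f ∘ zeroExtend) := by
  obtain ⟨Q, hstart, haccept, hlayer⟩ := P.exists_runLayer_eq_runLayer_zeroExtend hm hmn
  refine ⟨Q, fun y => ?_⟩
  rw [Function.comp_apply, hP]
  simp only [run, haccept, hstart, hlayer]

end KOBDD

theorem setOf_computes_subset {n k w' w : ℕ} (h : w' ≤ w) :
    {f : (Fin n → Bool) → Bool | ∃ P : KOBDD n k w', P.computes f}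
      ⊆ {f : (Fin n → Bool) → Bool | ∃ P : KOBDD n k w, P.computes f} :=
  fun _ ⟨P, hP⟩ => ⟨P.widen h, hP.widen h⟩

section TableProgram

variable {k V S n : ℕ}

def liftLive (f : Fin V → Fin V) : Fin (V + 1) → Fin (V + 1) :=
  Fin.lastCases (Fin.last V) (fun u => (f u).castSucc)

@[simp] theorem liftLive_last (f : Fin V → Fin V) : liftLive f (Fin.last V) = Fin.last V :=
  Fin.lastCases_last

@[simp] theorem liftLive_castSucc (f : Fin V → Fin V) (u : Fin V) :
    liftLive f u.castSucc = (f u).castSucc :=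
  Fin.lastCases_castSucc _

/-- Steering slots `(l, s)`, table slots `q`, crossing slots `(l, v)`, laid out in this order. -/
abbrev Slot (k V S : ℕ) := (Fin k × Fin V) ⊕ (Fin S ⊕ (Fin k × Fin V))

abbrev numSlots (k V S : ℕ) : ℕ := k * V + (S + k * V)

def slotEquiv : Slot k V S ≃ Fin (numSlots k V S) :=
  (Equiv.sumCongr finProdFinEquiv
    ((Equiv.sumCongr (Equiv.refl _) finProdFinEquiv).trans finSumFinEquiv)).trans finSumFinEquiv

def slotAct (A : Fin k → Fin S → Fin V → Fin V) (l : Fin k) :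
    Slot k V S → Fin (V + 1) → Fin (V + 1)
  | .inl (l', s) => if l' = l then liftLive (fun _ => s) else id
  | .inr (.inl q) => liftLive (A l q)
  | .inr (.inr (l', v)) =>
    if l' = l then (fun t => if t = v.castSucc then Fin.last V else t) else id

def posAct (A : Fin k → Fin S → Fin V → Fin V) (l : Fin k) (j : ℕ) :
    Fin (V + 1) → Fin (V + 1) :=
  if h : j < numSlots k V S then slotAct A l (slotEquiv.symm ⟨j, h⟩) else id

def tableProgram (n : ℕ) (A : Fin k → Fin S → Fin V → Fin V) : KOBDD n k (V + 1) where
  ord := Equiv.refl _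
  δ l j t b := if b then posAct A l j t else t
  start := 0
  accept t := decide (t = Fin.last V)

def tableFun (n : ℕ) (A : Fin k → Fin S → Fin V → Fin V) : (Fin n → Bool) → Bool :=
  fun x => (tableProgram n A).accept ((tableProgram n A).run x)

def slotInput (n : ℕ) (σs : List (Slot k V S)) : Fin n → Bool :=
  zeroExtend (fun i => decide (i ∈ σs.map slotEquiv))

theorem runLayer_tableProgram_slotInput (hmn : numSlots k V S ≤ n)
    (A : Fin k → Fin S → Fin V → Fin V) {σs : List (Slot k V S)}
    (hσs : (σs.map slotEquiv).SortedLT) (l : Fin k) (t : Fin (V + 1)) :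
    (tableProgram n A).runLayer (slotInput n σs) l t = σs.foldl (fun t σ => slotAct A l σ t) t := by
  have hfilter :
      (List.finRange n).filter (slotInput n σs) = σs.map (Fin.castLE hmn ∘ slotEquiv) := by
    apply List.SortedLT.eq_of_mem_iff
    · exact ((List.sortedLT_finRange n).pairwise.filter _).sortedLT
    · rw [← List.map_map, List.sortedLT_iff_pairwise, List.pairwise_map]
      exact hσs.pairwise.imp id
    · intro j
      simp only [List.mem_filter, List.mem_finRange, true_and, slotInput, zeroExtend,
        List.mem_map, Function.comp_apply]
      constructor
      · intro h
        split_ifs at h with hj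
        obtain ⟨σ, hσ, he⟩ := of_decide_eq_true h
        exact ⟨σ, hσ, Fin.ext (by simp [he])⟩
      · rintro ⟨σ, hσ, rfl⟩
        simp only [Fin.val_castLE, (slotEquiv σ).isLt, dite_true, decide_eq_true_eq]
        exact ⟨σ, hσ, rfl⟩
  simp only [KOBDD.runLayer, tableProgram, Equiv.refl_apply]
  rw [List.foldl_ite_eq_foldl_filter, hfilter, List.foldl_map]
  congr 1
  funext t σ
  simp [posAct]

def probe (l : Fin k) (s : Fin V) (q : Fin S) (v : Fin V) : List (Slot k V S) :=
  [.inl (l, s), .inr (.inl q), .inr (.inr (l, v))]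

theorem val_slotEquiv_inl (a : Fin k × Fin V) : (slotEquiv (.inl a : Slot k V S) : ℕ) < k * V :=
  (finProdFinEquiv a).isLt

theorem val_slotEquiv_inr_inl (q : Fin S) :
    (slotEquiv (.inr (.inl q) : Slot k V S) : ℕ) = k * V + q := by
  simp [slotEquiv]

theorem le_val_slotEquiv_inr_inr (b : Fin k × Fin V) :
    k * V + S ≤ (slotEquiv (.inr (.inr b) : Slot k V S) : ℕ) := by
  simp [slotEquiv]

theorem probe_sortedLT (l : Fin k) (s : Fin V) (q : Fin S) (v : Fin V) :
    ((probe l s q v).map slotEquiv).SortedLT := by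
  have h₁ := val_slotEquiv_inl (S := S) (l, s)
  have h₂ := val_slotEquiv_inr_inl (k := k) (V := V) q
  have h₃ := le_val_slotEquiv_inr_inr (S := S) (l, v)
  simp only [probe, List.map_cons, List.map_nil, List.sortedLT_iff_pairwise, List.pairwise_cons,
    List.mem_cons, List.not_mem_nil, or_false, forall_eq_or_imp, forall_eq, Fin.lt_def,
    List.Pairwise.nil, IsEmpty.forall_iff, implies_true, and_true]
  omega

theorem foldl_probe_last (A : Fin k → Fin S → Fin V → Fin V) (l l' : Fin k) (s : Fin V)
    (q : Fin S) (v : Fin V) :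
    (probe l' s q v).foldl (fun t σ => slotAct A l σ t) (Fin.last V) = Fin.last V := by
  by_cases hl : l' = l <;> simp [probe, slotAct, hl, (Fin.castSucc_lt_last v).ne']

theorem foldl_probe_of_ne (A : Fin k → Fin S → Fin V → Fin V) {l l' : Fin k} (hl : l ≠ l')
    (s : Fin V) (q : Fin S) (v u : Fin V) :
    (probe l' s q v).foldl (fun t σ => slotAct A l σ t) u.castSucc = (A l q u).castSucc := by
  simp [probe, slotAct, Ne.symm hl]

theorem foldl_probe_self (A : Fin k → Fin S → Fin V → Fin V) (l : Fin k) (s : Fin V) (q : Fin S)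
    (v u : Fin V) :
    (probe l s q v).foldl (fun t σ => slotAct A l σ t) u.castSucc =
      if A l q s = v then Fin.last V else (A l q s).castSucc := by
  simp [probe, slotAct]

theorem tableProgram_start_ne_last (A : Fin k → Fin S → Fin V → Fin V) (hV : 0 < V) :
    (tableProgram n A).start ≠ Fin.last V := by
  simpa [tableProgram, Fin.ext_iff] using hV.ne

theorem run_tableProgram_probe_of_eq (hmn : numSlots k V S ≤ n)
    (A : Fin k → Fin S → Fin V → Fin V) {l : Fin k} {s : Fin V} {q : Fin S} {v : Fin V}
    (hv : A l q s = v) :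
    (tableProgram n A).run (slotInput n (probe l s q v)) = Fin.last V := by
  simp only [KOBDD.run, runLayer_tableProgram_slotInput hmn A (probe_sortedLT l s q v)]
  refine List.foldl_eq_of_absorbing (S := {t | t ≠ Fin.last V}) (i₀ := l)
    (fun l' => foldl_probe_last A l' l s q v) (fun t ht => ?_) (fun l' hl' t ht => ?_)
    (List.mem_finRange l) _ (tableProgram_start_ne_last A s.pos)
  · obtain ⟨u, rfl⟩ := Fin.exists_castSucc_eq.2 ht
    simp [foldl_probe_self, hv]
  · obtain ⟨u, rfl⟩ := Fin.exists_castSucc_eq.2 ht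
    simp [foldl_probe_of_ne A hl', (Fin.castSucc_lt_last _).ne]

theorem run_tableProgram_probe_of_ne (hmn : numSlots k V S ≤ n)
    (A : Fin k → Fin S → Fin V → Fin V) {l : Fin k} {s : Fin V} {q : Fin S} {v : Fin V}
    (hv : A l q s ≠ v) :
    (tableProgram n A).run (slotInput n (probe l s q v)) ≠ Fin.last V := by
  simp only [KOBDD.run, runLayer_tableProgram_slotInput hmn A (probe_sortedLT l s q v)]
  refine List.foldl_mem_of_forall_mem (S := {t | t ≠ Fin.last V}) (fun l' t ht => ?_) _ _
    (tableProgram_start_ne_last A s.pos)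
  obtain ⟨u, rfl⟩ := Fin.exists_castSucc_eq.2 ht
  by_cases hl' : l' = l
  · subst hl'
    simp [foldl_probe_self, hv, (Fin.castSucc_lt_last _).ne]
  · simp [foldl_probe_of_ne A hl', (Fin.castSucc_lt_last _).ne]

theorem tableFun_comp_zeroExtend_injective (hmn : numSlots k V S ≤ n) :
    Function.Injective fun A : Fin k → Fin S → Fin V → Fin V =>
      tableFun n A ∘ zeroExtend (m := numSlots k V S) := by
  intro A B hAB
  by_contra hne
  obtain ⟨l, q, s, hs⟩ : ∃ l q s, A l q s ≠ B l q s := by simpa [funext_iff] using hne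
  have h := congrFun hAB (fun i => decide (i ∈ (probe l s q (A l q s)).map slotEquiv))
  change tableFun n A (slotInput n _) = tableFun n B (slotInput n _) at h
  rw [tableFun, tableFun, run_tableProgram_probe_of_eq hmn A rfl] at h
  simp only [tableProgram, decide_true, Eq.comm (a := true), decide_eq_true_eq] at h
  exact run_tableProgram_probe_of_ne hmn B (Ne.symm hs) h

theorem card_tables_le_card_KOBDD {w : ℕ} (hm : 0 < numSlots k V S)
    (hmn : numSlots k V S ≤ n)
    (h : ∀ A : Fin k → Fin S → Fin V → Fin V, ∃ P : KOBDD n k w, P.computes (tableFun n A)) :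
    Nat.card (Fin k → Fin S → Fin V → Fin V) ≤ Nat.card (KOBDD (numSlots k V S) k w) := by
  choose Q hQ using fun A =>
    (h A).elim fun _ hP => KOBDD.exists_computes_comp_zeroExtend hP hm hmn
  refine Nat.card_le_card_of_injective Q fun A B hAB => tableFun_comp_zeroExtend_injective hmn ?_
  exact funext fun y => (hQ A y).trans (hAB ▸ (hQ B y).symm)

end TableProgram

theorem three_mul_mul_le_pow {k V : ℕ} (hV : 3 ≤ V) : 3 * k * V ≤ V ^ (k + 2) := by
  have hk : k ≤ V ^ k := Nat.lt_two_pow_self.le.trans (Nat.pow_le_pow_left (by omega) k)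
  calc 3 * k * V ≤ V * V ^ k * V := by gcongr
    _ = V ^ (k + 2) := by ring

theorem card_KOBDD_lt_card_tables {k V a : ℕ} (hk : 1 ≤ k) (hV : 16 * a + 47 ≤ V) :
    Nat.card (KOBDD (numSlots k V (k * V)) k a) <
      Nat.card (Fin k → Fin (k * V) → Fin V → Fin V) := by
  set m := numSlots k V (k * V)
  have hm : m = 3 * k * V := by ring
  have hexp : (k + 2) * m + 2 * a * m * k + 1 + a < V * (k * V) * k := by
    have hkkV : 1 ≤ k * k * V := Nat.mul_pos (Nat.mul_pos hk hk) (by omega)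
    calc (k + 2) * m + 2 * a * m * k + 1 + a
        ≤ k * k * V * (7 * a + 10) := by rw [hm]; nlinarith
      _ < k * k * V * V := Nat.mul_lt_mul_of_pos_left (by omega) (by omega)
      _ = V * (k * V) * k := by ring
  calc Nat.card (KOBDD m k a)
      = m.factorial * (((a ^ 2) ^ a) ^ m) ^ k * a * 2 ^ a := KOBDD.card_eq _ _ _
    _ ≤ (V ^ (k + 2)) ^ m * (((V ^ 2) ^ a) ^ m) ^ k * V * V ^ a := by
      gcongr
      · exact m.factorial_le_pow.trans
          (Nat.pow_le_pow_left (hm ▸ three_mul_mul_le_pow (by omega)) m)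
      all_goals omega
    _ = V ^ ((k + 2) * m + 2 * a * m * k + 1 + a) := by ring
    _ < V ^ (V * (k * V) * k) := Nat.pow_lt_pow_right (by omega) hexp
    _ = Nat.card (Fin k → Fin (k * V) → Fin V → Fin V) := by simp [← pow_mul]

/-- for `k ≥ 2`, `w ≥ 64` and
`2kw(2w + ⌈log₂ k⌉ + ⌈log₂(2w)⌉) < n`, the class of Boolean functions on `n`
variables computable by `k`-OBDDs of width `⌊w/16⌋ - 3` is strictly contained in
the class computable by `k`-OBDDs of width `w`. -/
theorem stmt10 (n k w : ℕ) (hk : 2 ≤ k) (hw : 64 ≤ w)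
    (hsize : 2 * k * w * (2 * w + Nat.clog 2 k + Nat.clog 2 (2 * w)) < n) :
    {f : (Fin n → Bool) → Bool | ∃ P : KOBDD n k (w / 16 - 3), P.computes f}
      ⊂ {f : (Fin n → Bool) → Bool | ∃ P : KOBDD n k w, P.computes f} := by
  obtain ⟨V, rfl⟩ : ∃ V, w = V + 1 := ⟨w - 1, by omega⟩
  refine (Set.ssubset_iff_of_subset (setOf_computes_subset (by omega))).2 ?_
  by_contra! hsmall
  have hmn : numSlots k V (k * V) ≤ n := by
    have := Nat.mul_le_mul_left (2 * k * (V + 1))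
      (Nat.le_add_right (2 * (V + 1)) (Nat.clog 2 k + Nat.clog 2 (2 * (V + 1))))
    simp only [numSlots]
    nlinarith
  have hcard := card_tables_le_card_KOBDD (by simp only [numSlots]; nlinarith) hmn
    fun A => hsmall (tableFun n A) ⟨tableProgram n A, fun _ => rfl⟩
  exact (card_KOBDD_lt_card_tables (by omega) (by omega)).not_ge hcard
end
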